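/- Let a, a′, λ ∈ ℂ be nonzero and x₀, x₁ ∈ ℂ. If a·(1 + x₀·ε)·(𝐣 + I·𝐤) = λ·conj(a′·(1 + x₁·ε)·(𝐣 + I·𝐤)) in the ℂ-dual quaternions, where conj denotes quaternion conjugation applied to both the primal and the dual part, then x₀ = x₁. -/

import Mathlib

open Quaternion TrivSqZeroExt DualNumber

noncomputable section

/-- The ℂ-dual quaternions. -/
abbrev DQ : Type := DualNumber (Quaternion ℂ)

/-- The quaternion unit 𝐣, viewed as a dual quaternion. -/
def qj : DQ := inl (⟨0,0,1,0⟩ : ℍ[ℂ])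
/-- The quaternion unit 𝐤, viewed as a dual quaternion. -/
def qk : DQ := inl (⟨0,0,0,1⟩ : ℍ[ℂ])

/-- A complex scalar, viewed as a dual quaternion. -/
def cs (a : ℂ) : DQ := inl (algebraMap ℂ ℍ[ℂ] a)

/-- Quaternion conjugation of a dual quaternion, applied to both
the primal and dual part. -/
def dconj (q : DQ) : DQ := inl (star (fst q)) + inr (star (snd q))

/-! Quaternion conjugation fixes complex scalars and negates the pure quaternion `𝐣 + I𝐤`, so
the conjugate of `a′(1 + x₁ε)(𝐣 + I𝐤)` is `-a′(1 + x₁ε)(𝐣 + I𝐤)`, and the hypothesis becomes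
`a(1 + x₀ε)(𝐣 + I𝐤) = b(1 + x₁ε)(𝐣 + I𝐤)` with `b = -λa′`. The primal and dual parts of
`b(1 + xε)(𝐣 + I𝐤)` are `b(𝐣 + I𝐤)` and `bx(𝐣 + I𝐤)`, so `a = b` and `ax₀ = bx₁`; as `a ≠ 0`,
`x₀ = x₁`. -/

namespace DualNumber

lemma inl_algebraMap_mul_one_add_mul_eps_mul_inl {R A : Type*} [CommSemiring R] [Semiring A]
    [Algebra R A] (a x : R) (p : A) :
    (inl (algebraMap R A a) : A[ε]) * (1 + inl (algebraMap R A x) * ε) * inl p =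
      inl (a • p) + inr ((a * x) • p) := by
  ext <;> simp [Algebra.smul_def, mul_assoc]

end DualNumber

def jAddIk : ℍ[ℂ] := ⟨0, 0, 1, Complex.I⟩

lemma star_jAddIk : star jAddIk = -jAddIk := Quaternion.star_eq_neg.2 rfl

lemma jAddIk_ne_zero : jAddIk ≠ 0 := fun h => by
  simpa [jAddIk] using congrArg QuaternionAlgebra.imJ h

lemma qj_add_I_mul_qk : qj + cs Complex.I * qk = inl jAddIk := by
  have fst_qj : qj.fst = ⟨0, 0, 1, 0⟩ := rfl
  have fst_qk : qk.fst = ⟨0, 0, 0, 1⟩ := rfl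
  have snd_qj : qj.snd = 0 := rfl
  have snd_qk : qk.snd = 0 := rfl
  ext : 1
  · simp only [cs, fst_add, fst_mul, fst_inl, Quaternion.algebraMap_def,
      Quaternion.coe_mul_eq_smul]
    -- The literals in `qj`, `qk` have type `QuaternionAlgebra ℂ (-1) 0 (-1)`, not `ℍ[ℂ]`, so the
    -- `Quaternion` simp lemmas must be applied before `fst_qj`, `fst_qk` expose them.
    ext <;> simp only [Quaternion.re_add, Quaternion.imI_add, Quaternion.imJ_add,
      Quaternion.imK_add, Quaternion.re_smul, Quaternion.imI_smul, Quaternion.imJ_smul,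
      Quaternion.imK_smul] <;> simp [fst_qj, fst_qk, jAddIk]
  · simp [cs, snd_qj, snd_qk]

def ofRoot (a x : ℂ) : DQ := cs a * (1 + cs x * ε) * (qj + cs Complex.I * qk)

lemma ofRoot_eq (a x : ℂ) : ofRoot a x = inl (a • jAddIk) + inr ((a * x) • jAddIk) := by
  rw [ofRoot, qj_add_I_mul_qk]
  exact DualNumber.inl_algebraMap_mul_one_add_mul_eps_mul_inl a x jAddIk

lemma cs_mul_ofRoot (c a x : ℂ) : cs c * ofRoot a x = ofRoot (c * a) x := by
  simp only [ofRoot, cs, map_mul, inl_mul, mul_assoc]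

lemma dconj_ofRoot (a x : ℂ) : dconj (ofRoot a x) = ofRoot (-a) x := by
  rw [ofRoot_eq, ofRoot_eq]
  ext <;> simp [dconj, Quaternion.star_smul, star_jAddIk]

lemma ofRoot_inj {a b x y : ℂ} (ha : a ≠ 0) : ofRoot a x = ofRoot b y ↔ a = b ∧ x = y := by
  refine ⟨fun h => ?_, by rintro ⟨rfl, rfl⟩; rfl⟩
  have smul_injective := smul_left_injective ℂ jAddIk_ne_zero
  rw [ofRoot_eq, ofRoot_eq] at h
  have hab : a = b := smul_injective (by simpa using congrArg fst h)
  have haxby : a * x = b * y := smul_injective (by simpa using congrArg snd h)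
  subst hab
  exact ⟨rfl, mul_left_cancel₀ ha haxby⟩

theorem proj_equiv_conj_implies_equal_roots_general
    (a a' lam x₀ x₁ : ℂ) (ha : a ≠ 0)
    (h : cs a * (1 + cs x₀ * ε) * (qj + cs Complex.I * qk) =
      cs lam * dconj (cs a' * (1 + cs x₁ * ε) * (qj + cs Complex.I * qk))) :
    x₀ = x₁ := by
  change ofRoot a x₀ = cs lam * dconj (ofRoot a' x₁) at h
  rw [dconj_ofRoot, cs_mul_ofRoot] at h
  exact ((ofRoot_inj ha).1 h).2

/-- If `a(1 + x₀ε)(𝐣 + I𝐤)` is a nonzero scalar multiple of the quaternion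
conjugate of `a′(1 + x₁ε)(𝐣 + I𝐤)`, then `x₀ = x₁`. -/
theorem proj_equiv_conj_implies_equal_roots
    (a a' lam x₀ x₁ : ℂ) (ha : a ≠ 0) (ha' : a' ≠ 0) (hlam : lam ≠ 0)
    (h : cs a * (1 + cs x₀ * ε) * (qj + cs Complex.I * qk) =
      cs lam * dconj (cs a' * (1 + cs x₁ * ε) * (qj + cs Complex.I * qk))) :
    x₀ = x₁ :=
  proj_equiv_conj_implies_equal_roots_general a a' lam x₀ x₁ ha h
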